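/- arXiv:0710.4862 — 4 statements merged into one kernel-verified Lean document; each statement's English description precedes it below -/
import Mathlib

section
/- Let r ∈ ℕ, let (X, B, μ, T) be a measure preserving dynamical system, and let (B_α)_{α≥1} be an increasing sequence of T-invariant sub-σ-algebras of B such that the σ-algebra generated by ⋃_{α≥1} B_α is B. Then for every B ∈ B there exist α ≥ 1 and B' ∈ B_α such that μ(B') ≥ μ(B)/2 and, for all n₁,…,n_r ∈ ℤ, μ(B ∩ T^{−n₁}B ∩ … ∩ T^{−n_r}B) ≥ (1/2) μ(B' ∩ T^{−n₁}B' ∩ … ∩ T^{−n_r}B'). -/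
/-!
Let `f = 𝔼[1_A | B_α]` and `A' = {f ≥ 1 - η}` with `η = 1 / (2 (r + 1))`. By the L¹ martingale
convergence theorem `f → 1_A` in L¹, so for large `α` Markov's inequality makes `μ (A \ A')`
smaller than `μ A / 2`.

If `t ∈ B_α` lies in `A'`, then `μ (t \ A) = ∫_t (1 - f) ≤ η μ t`. Put `s = A' ∩ ⋂ T^{-nᵢ} A'`.
By invariance `s = T^{-n} t` with `t ∈ B_α`, and `t ⊆ A'` up to a null set whenever
`s ⊆ T^{-n} A'`; hence `μ (s \ T^{-n} A) = μ (t \ A) ≤ η μ s` for `n = 0, n₁, …, n_r`, and a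
union bound gives `μ (s \ (A ∩ ⋂ T^{-nᵢ} A)) ≤ (r + 1) η μ s = μ s / 2`.
-/

open MeasureTheory

/-- The ℤ-power of an invertible transformation `T` with inverse `S`. -/
def zpowIter {X : Type*} (T S : X → X) : ℤ → X → X
  | Int.ofNat k => T^[k]
  | Int.negSucc k => S^[k + 1]

section

open Filter Set
open scoped ENNReal

variable {X : Type*} {m m0 : MeasurableSpace X} {μ : Measure X}

theorem measureReal_diff_inter_iInter_le {ι : Type*} [Fintype ι] (s A : Set X) (F : ι → Set X) :
    μ.real (s \ (A ∩ ⋂ i, F i)) ≤ μ.real (s \ A) + ∑ i, μ.real (s \ F i) := by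
  rw [sdiff_inter, sdiff_iInter]
  exact (measureReal_union_le _ _).trans (by gcongr; exact measureReal_iUnion_fintype_le _)

theorem measure_div_two_le_of_measure_diff_le {A A' : Set X} (hA : μ A ≠ ∞)
    (h : μ (A \ A') ≤ μ A / 2) : μ A / 2 ≤ μ A' := by
  rw [← ENNReal.sub_half hA, tsub_le_iff_right]
  exact (measure_le_inter_add_sdiff μ A A').trans (add_le_add (measure_mono inter_subset_right) h)

theorem measureReal_diff_le_of_le_condExp_indicator [IsFiniteMeasure μ] (hm : m ≤ m0)
    {A t : Set X} (hA : MeasurableSet A) (ht : MeasurableSet[m] t) {c : ℝ}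
    (hc : ∀ᵐ x ∂μ, x ∈ t → c ≤ μ[A.indicator 1|m] x) :
    μ.real (t \ A) ≤ (1 - c) * μ.real t := by
  have hAint : Integrable (A.indicator 1) μ := (integrable_const (1 : ℝ)).indicator hA
  have hlow : c * μ.real t ≤ ∫ x in t, μ[A.indicator 1|m] x ∂μ := by
    rw [mul_comm, ← smul_eq_mul, ← setIntegral_const]
    exact setIntegral_mono_on_ae (integrable_const c).integrableOn integrable_condExp.integrableOn
      (hm t ht) hc
  have hint : ∫ x in t, μ[A.indicator 1|m] x ∂μ = μ.real (t ∩ A) := by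
    rw [setIntegral_condExp hm hAint ht, integral_indicator_one hA, measureReal_restrict_apply hA,
      inter_comm]
  have := measureReal_inter_add_sdiff (μ := μ) (s := t) hA
  linarith

theorem measureReal_diff_preimage_le_of_le_condExp_indicator [IsFiniteMeasure μ] (hm : m ≤ m0)
    {V : X → X} (hV : MeasurePreserving V μ μ) (hVm : m ≤ m.comap V)
    {A s : Set X} (hA : MeasurableSet A) (hs : MeasurableSet[m] s) {c : ℝ}
    (hsc : s ⊆ V ⁻¹' {x | c ≤ μ[A.indicator 1|m] x}) :
    μ.real (s \ V ⁻¹' A) ≤ (1 - c) * μ.real s := by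
  obtain ⟨t, ht, rfl⟩ := hVm s hs
  have htc : ∀ᵐ x ∂μ, x ∈ t → c ≤ μ[A.indicator 1|m] x := by
    have hmeas : MeasurableSet {x | x ∈ t → c ≤ μ[A.indicator 1|m] x} :=
      measurableSet_setOfPred.2 <| (measurableSet_setOfPred.1 (hm t ht)).imp <|
        measurableSet_setOfPred.1 <|
          measurableSet_le measurable_const (stronglyMeasurable_condExp.mono hm).measurable
    have := (ae_map_iff hV.aemeasurable hmeas).2 (ae_of_all _ fun x hx => hsc hx)
    rwa [hV.map_eq] at this
  rw [← preimage_sdiff, hV.measureReal_preimage ((hm t ht).diff hA).nullMeasurableSet,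
    hV.measureReal_preimage (hm t ht).nullMeasurableSet]
  exact measureReal_diff_le_of_le_condExp_indicator hm hA ht htc

theorem mul_measure_diff_le_eLpNorm_sub_indicator {A : Set X} (hA : MeasurableSet A)
    {f : X → ℝ} (hf : AEStronglyMeasurable f μ) (η : ℝ) :
    ENNReal.ofReal η * μ (A \ {x | 1 - η ≤ f x}) ≤ eLpNorm (f - A.indicator 1) 1 μ := by
  have hsub : A \ {x | 1 - η ≤ f x} ⊆
      {x | ENNReal.ofReal η ≤ ‖(f - A.indicator (1 : X → ℝ)) x‖ₑ} := by
    rintro x ⟨hxA, hxf⟩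
    simp only [mem_ofPred_eq, not_le] at hxf
    simp only [mem_ofPred_eq, Pi.sub_apply, indicator_of_mem hxA, Pi.one_apply,
      Real.enorm_eq_ofReal_abs]
    exact ENNReal.ofReal_le_ofReal (by rw [abs_sub_comm]; exact le_abs.2 (Or.inl (by linarith)))
  calc ENNReal.ofReal η * μ (A \ {x | 1 - η ≤ f x})
      ≤ ENNReal.ofReal η * μ {x | ENNReal.ofReal η ≤ ‖(f - A.indicator (1 : X → ℝ)) x‖ₑ} := by
        gcongr
    _ ≤ eLpNorm (f - A.indicator 1) 1 μ := by
        simpa only [ENNReal.toReal_one, ENNReal.rpow_one] using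
          mul_meas_ge_le_pow_eLpNorm' μ one_ne_zero ENNReal.one_ne_top
            (hf.sub (aestronglyMeasurable_one.indicator hA)) (ENNReal.ofReal η)

theorem measure_inter_iInter_preimage_le_two_mul [IsFiniteMeasure μ] (hm : m ≤ m0)
    {ι : Type*} [Fintype ι] {V : ι → X → X} (hV : ∀ i, MeasurePreserving (V i) μ μ)
    (hVm : ∀ i, m.comap (V i) = m) {A A' : Set X} (hA : MeasurableSet A)
    (hA'm : MeasurableSet[m] A') {η : ℝ} (hA' : A' ⊆ {x | 1 - η ≤ μ[A.indicator 1|m] x})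
    (hη : (Fintype.card ι + 1) * η ≤ 1 / 2) :
    μ (A' ∩ ⋂ i, V i ⁻¹' A') ≤ 2 * μ (A ∩ ⋂ i, V i ⁻¹' A) := by
  set s := A' ∩ ⋂ i, V i ⁻¹' A'
  have hs : MeasurableSet[m] s :=
    hA'm.inter (.iInter fun i => Measurable.of_comap_le (hVm i).le hA'm)
  have hsA : μ.real (s \ A) ≤ η * μ.real s := by
    simpa using measureReal_diff_le_of_le_condExp_indicator hm hA hs
      (ae_of_all _ fun x hx => hA' hx.1)
  have hsV : ∀ i, μ.real (s \ V i ⁻¹' A) ≤ η * μ.real s := fun i => by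
    simpa using measureReal_diff_preimage_le_of_le_condExp_indicator hm (hV i) (hVm i).ge hA hs
      fun x hx => hA' (mem_iInter.1 hx.2 i)
  have hdiff : μ.real (s \ (A ∩ ⋂ i, V i ⁻¹' A)) ≤ μ.real s / 2 := by
    calc μ.real (s \ (A ∩ ⋂ i, V i ⁻¹' A))
        ≤ μ.real (s \ A) + ∑ i, μ.real (s \ V i ⁻¹' A) := measureReal_diff_inter_iInter_le _ _ _
      _ ≤ η * μ.real s + ∑ _i : ι, η * μ.real s := by gcongr with i; exact hsV i
      _ = (Fintype.card ι + 1) * η * μ.real s := by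
        rw [Finset.sum_const, Finset.card_univ, nsmul_eq_mul]; ring
      _ ≤ μ.real s / 2 := by nlinarith [measureReal_nonneg (μ := μ) (s := s)]
  have hAK : MeasurableSet (A ∩ ⋂ i, V i ⁻¹' A) :=
    hA.inter (.iInter fun i => (hV i).measurable hA)
  have hsplit := measureReal_inter_add_sdiff (μ := μ) (s := s) hAK
  have hinter : μ.real (s ∩ (A ∩ ⋂ i, V i ⁻¹' A)) ≤ μ.real (A ∩ ⋂ i, V i ⁻¹' A) :=
    measureReal_mono inter_subset_right
  rw [← ENNReal.toReal_le_toReal (measure_ne_top μ s) (by finiteness), ENNReal.toReal_mul]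
  simp only [ENNReal.toReal_ofNat, ← measureReal_def]
  linarith

theorem MeasurableSpace.comap_iterate_eq {m : MeasurableSpace X} {f : X → X} (hf : m.comap f = m)
    (k : ℕ) : m.comap f^[k] = m := by
  induction k with
  | zero => exact MeasurableSpace.comap_id
  | succ k ih => rw [Function.iterate_succ', ← MeasurableSpace.comap_comp, hf, ih]

theorem measurePreserving_zpowIter {T S : X → X} (hT : MeasurePreserving T μ μ)
    (hS : MeasurePreserving S μ μ) : ∀ n, MeasurePreserving (zpowIter T S n) μ μ
  | Int.ofNat k => hT.iterate k
  | Int.negSucc k => hS.iterate (k + 1)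

theorem comap_zpowIter {T S : X → X} (hTS : Function.RightInverse S T) (hT : m.comap T = m) :
    ∀ n, m.comap (zpowIter T S n) = m
  | Int.ofNat k => MeasurableSpace.comap_iterate_eq hT k
  | Int.negSucc k => by
    refine MeasurableSpace.comap_iterate_eq ?_ (k + 1)
    nth_rw 1 [← hT]
    rw [MeasurableSpace.comap_comp, hTS.comp_eq_id, MeasurableSpace.comap_id]

end

theorem approx_by_sub_sigma_algebra_general {X : Type*} [m0 : MeasurableSpace X]
    (μ : Measure X) [IsProbabilityMeasure μ]
    (T S : X → X) (hT : MeasurePreserving T μ μ) (hS : MeasurePreserving S μ μ)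
    (hTS : Function.RightInverse S T)
    (r : ℕ) (B : ℕ → MeasurableSpace X)
    (hle : ∀ α, B α ≤ m0) (hmono : Monotone B)
    (hinvariant : ∀ α, MeasurableSpace.comap T (B α) = B α)
    (hgen : (⨆ α, B α) = m0)
    (A : Set X) (hA : MeasurableSet A) :
    ∃ (α : ℕ) (A' : Set X), MeasurableSet[B α] A' ∧ μ A / 2 ≤ μ A' ∧
      ∀ n : Fin r → ℤ,
        μ (A' ∩ ⋂ i, zpowIter T S (n i) ⁻¹' A') ≤
          2 * μ (A ∩ ⋂ i, zpowIter T S (n i) ⁻¹' A) := by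
  rcases eq_or_ne (μ A) 0 with hA0 | hA0
  · exact ⟨0, ∅, @MeasurableSet.empty _ (B 0), by simp [hA0], fun _ => by simp⟩
  set η : ℝ := 1 / (2 * (r + 1))
  have hη : ENNReal.ofReal η ≠ 0 := (ENNReal.ofReal_pos.2 (by positivity)).ne'
  let ℱ : Filtration ℕ m0 := ⟨B, hmono, hle⟩
  have hAint : Integrable (A.indicator (1 : X → ℝ)) μ := (integrable_const 1).indicator hA
  have hconv := hAint.tendsto_eLpNorm_condExp (ℱ := ℱ) <| by
    rw [show ⨆ n, ℱ n = m0 from hgen]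
    exact stronglyMeasurable_const.indicator hA
  obtain ⟨α, hα⟩ := (hconv.eventually
    (gt_mem_nhds (ENNReal.mul_pos hη (ENNReal.half_pos hA0).ne'))).exists
  refine ⟨α, {x | 1 - η ≤ μ[A.indicator 1|B α] x},
    measurableSet_le measurable_const stronglyMeasurable_condExp.measurable, ?_, fun n => ?_⟩
  · exact measure_div_two_le_of_measure_diff_le (measure_ne_top μ A)
      ((ENNReal.mul_le_mul_iff_right hη ENNReal.ofReal_ne_top).1
        ((mul_measure_diff_le_eLpNorm_sub_indicator hA
          (stronglyMeasurable_condExp.mono (hle α)).aestronglyMeasurable η).trans hα.le))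
  · refine measure_inter_iInter_preimage_le_two_mul (hle α)
      (fun i => measurePreserving_zpowIter hT hS (n i))
      (fun i => comap_zpowIter hTS (hinvariant α) (n i)) hA
      (measurableSet_le measurable_const stronglyMeasurable_condExp.measurable) subset_rfl ?_
    exact le_of_eq (by simp only [Fintype.card_fin, η]; field_simp)

/-- Let `(X, B, μ, T)` be an invertible probability measure preserving
system and `(B_α)` an increasing sequence of `T`-invariant sub-σ-algebras generating `B`.
Then for every measurable `B` there are `α` and `B' ∈ B_α` with `μ(B') ≥ μ(B)/2` and
`μ(B ∩ T^{-n₁}B ∩ … ∩ T^{-n_r}B) ≥ (1/2) μ(B' ∩ T^{-n₁}B' ∩ … ∩ T^{-n_r}B')`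
for all `n₁, …, n_r ∈ ℤ`. -/
theorem approx_by_sub_sigma_algebra {X : Type*} [m0 : MeasurableSpace X]
    (μ : Measure X) [IsProbabilityMeasure μ]
    (T S : X → X) (hT : MeasurePreserving T μ μ) (hS : MeasurePreserving S μ μ)
    (hST : Function.LeftInverse S T) (hTS : Function.RightInverse S T)
    (r : ℕ) (B : ℕ → MeasurableSpace X)
    (hle : ∀ α, B α ≤ m0) (hmono : Monotone B)
    (hinvariant : ∀ α, MeasurableSpace.comap T (B α) = B α)
    (hgen : (⨆ α, B α) = m0)
    (A : Set X) (hA : MeasurableSet A) :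
    ∃ (α : ℕ) (A' : Set X), MeasurableSet[B α] A' ∧ μ A / 2 ≤ μ A' ∧
      ∀ n : Fin r → ℤ,
        μ (A' ∩ ⋂ i, zpowIter T S (n i) ⁻¹' A') ≤
          2 * μ (A ∩ ⋂ i, zpowIter T S (n i) ⁻¹' A) :=
  approx_by_sub_sigma_algebra_general (m0 := m0) μ T S hT hS hTS r B hle hmono hinvariant hgen A hA
end

section
/- Let Λ be a lattice in ℤ^m and let p₁,…,p_r be integral polynomials that are jointly intersective on Λ. Then for every sublattice Λ' of Λ there exists l ∈ ℤ^m such that Λ' + l ⊆ Λ and p₁,…,p_r are jointly intersective on Λ' + l. -/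
noncomputable def evalZm {m : ℕ} (p : MvPolynomial (Fin m) ℚ) (n : Fin m → ℤ) : ℚ :=
  MvPolynomial.eval (fun i => (n i : ℚ)) p

/-- The integer value of an integral polynomial at an integer point. -/
noncomputable def zval {m : ℕ} (p : MvPolynomial (Fin m) ℚ) (n : Fin m → ℤ) : ℤ :=
  (evalZm p n).num

/-- A lattice in `ℤ^m`: a coset of a finite-index subgroup of `ℤ^m`. -/
def IsLattice {m : ℕ} (Λ : Set (Fin m → ℤ)) : Prop :=
  ∃ (H : AddSubgroup (Fin m → ℤ)) (l : Fin m → ℤ), H.FiniteIndex ∧ Λ = {x | x - l ∈ H}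

/-- A rational polynomial taking integer values on `Λ`. -/
def IsIntegralOn {m : ℕ} (p : MvPolynomial (Fin m) ℚ) (Λ : Set (Fin m → ℤ)) : Prop :=
  ∀ n ∈ Λ, ∃ z : ℤ, evalZm p n = (z : ℚ)

/-- `p₁, …, p_r` are jointly intersective on `Λ`: for every `k ∈ ℕ` there is `n ∈ Λ`
such that `k` divides every `pᵢ(n)`. -/
def JointlyIntersectiveOn {m r : ℕ} (p : Fin r → MvPolynomial (Fin m) ℚ)
    (Λ : Set (Fin m → ℤ)) : Prop :=
  ∀ k : ℕ, 0 < k → ∃ n ∈ Λ, ∀ i, ∃ z : ℤ, evalZm (p i) n = (k : ℚ) * z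

/-!
Pick `nₖ ∈ Λ` with `k!` dividing every `pᵢ(nₖ)`. The group `H'` of `Λ'` has finite index, so
infinitely many `nₖ` lie in one coset `x + H'`, and that coset is the translate of `Λ'` we want: it
lies in `Λ` because `x ∈ Λ` and `H'` is contained in the group of `Λ`, and for any `k` it contains
some `n_K` with `K ≥ k`, at which all `pᵢ` are divisible by `K!`, hence by `k`.
-/

theorem exists_fiber_meets_forall_of_dvd_antitone {β α : Type*} [Finite α] (f : β → α)
    (D : ℕ → Set β) (hD : ∀ {k k'}, k ∣ k' → D k' ⊆ D k)
    (hne : ∀ k, 0 < k → (D k).Nonempty) :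
    ∃ a, ∀ k, 0 < k → ∃ n ∈ D k, f n = a := by
  choose n hn using fun k : ℕ => hne k.factorial k.factorial_pos
  obtain ⟨a, ha⟩ := Finite.exists_infinite_fiber (f ∘ n)
  rw [Set.infinite_coe_iff] at ha
  refine ⟨a, fun k hk => ?_⟩
  obtain ⟨K, hKa, hkK⟩ := ha.exists_gt k
  exact ⟨n K, hD (Nat.dvd_factorial hk hkK.le) (hn K), hKa⟩

section Coset

variable {G : Type*} [AddCommGroup G]

theorem AddSubgroup.le_of_coset_subset {H H' : AddSubgroup G} {l l' : G}
    (h : {x | x - l' ∈ H'} ⊆ {x | x - l ∈ H}) : H' ≤ H := fun y hy => by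
  have hl' : l' - l ∈ H := h (by simp)
  have hyl' : y + l' - l ∈ H := h (by simpa using hy)
  simpa using H.sub_mem hyl' hl'

theorem AddSubgroup.coset_subset_coset {H H' : AddSubgroup G} (hle : H' ≤ H) {x l : G}
    (hx : x - l ∈ H) : {y | y - x ∈ H'} ⊆ {y | y - l ∈ H} := fun y hy => by
  simpa using H.add_mem (hle hy) hx

theorem AddSubgroup.image_add_coset (H : AddSubgroup G) (l x : G) :
    (fun y => y + (x - l)) '' {y | y - l ∈ H} = {y | y - x ∈ H} := by
  ext y
  constructor
  · rintro ⟨z, hz, rfl⟩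
    simpa only [Set.mem_ofPred_eq, show z + (x - l) - x = z - l by abel] using hz
  · intro hy
    exact ⟨y - (x - l), by simpa [sub_sub, add_comm l] using hy, sub_add_cancel y (x - l)⟩

end Coset

section Divisibility

variable {m r : ℕ} (p : Fin r → MvPolynomial (Fin m) ℚ)

def dvdLocus (k : ℕ) : Set (Fin m → ℤ) :=
  {n | ∀ i, ∃ z : ℤ, evalZm (p i) n = (k : ℚ) * z}

variable {p}

theorem dvdLocus_subset_of_dvd {k k' : ℕ} (h : k ∣ k') : dvdLocus p k' ⊆ dvdLocus p k := by
  rintro n hn i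
  obtain ⟨c, rfl⟩ := h
  obtain ⟨z, hz⟩ := hn i
  exact ⟨c * z, by rw [hz]; push_cast; ring⟩

theorem jointlyIntersectiveOn_iff {Λ : Set (Fin m → ℤ)} :
    JointlyIntersectiveOn p Λ ↔ ∀ k, 0 < k → (Λ ∩ dvdLocus p k).Nonempty :=
  forall₂_congr fun _ _ => by simp only [Set.Nonempty, Set.mem_inter_iff, dvdLocus,
    Set.mem_ofPred_eq]

end Divisibility

theorem jointly_intersective_on_translated_sublattice_general {m r : ℕ}
    (p : Fin r → MvPolynomial (Fin m) ℚ) (Λ : Set (Fin m → ℤ)) (hΛ : IsLattice Λ)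
    (hJI : JointlyIntersectiveOn p Λ)
    (Λ' : Set (Fin m → ℤ)) (hΛ' : IsLattice Λ') (hsub : Λ' ⊆ Λ) :
    ∃ l : Fin m → ℤ, (fun x => x + l) '' Λ' ⊆ Λ ∧
      JointlyIntersectiveOn p ((fun x => x + l) '' Λ') := by
  obtain ⟨H, l, -, rfl⟩ := hΛ
  obtain ⟨H', l', hH', rfl⟩ := hΛ'
  obtain ⟨q, hq⟩ := exists_fiber_meets_forall_of_dvd_antitone
    (QuotientAddGroup.mk : (Fin m → ℤ) → (Fin m → ℤ) ⧸ H') (fun k => _ ∩ dvdLocus p k)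
    (fun h => Set.inter_subset_inter_right _ (dvdLocus_subset_of_dvd h))
    (jointlyIntersectiveOn_iff.mp hJI)
  obtain ⟨x, ⟨hxΛ, -⟩, rfl⟩ := hq 1 one_pos
  refine ⟨x - l', ?_, ?_⟩ <;> rw [H'.image_add_coset]
  · exact H.coset_subset_coset (AddSubgroup.le_of_coset_subset hsub) hxΛ
  · refine jointlyIntersectiveOn_iff.mpr fun k hk => ?_
    obtain ⟨n, ⟨-, hn⟩, hnx⟩ := hq k hk
    exact ⟨n, by simpa using (QuotientAddGroup.eq_iff_sub_mem).mp hnx, hn⟩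

/-- If `p₁,…,p_r` are jointly intersective on a lattice `Λ`, then for any
sublattice `Λ'` of `Λ` there is `l` such that `Λ' + l ⊆ Λ` and `p₁,…,p_r` are jointly
intersective on `Λ' + l`. -/
theorem jointly_intersective_on_translated_sublattice {m r : ℕ}
    (p : Fin r → MvPolynomial (Fin m) ℚ) (Λ : Set (Fin m → ℤ)) (hΛ : IsLattice Λ)
    (hint : ∀ i, IsIntegralOn (p i) Λ) (hJI : JointlyIntersectiveOn p Λ)
    (Λ' : Set (Fin m → ℤ)) (hΛ' : IsLattice Λ') (hsub : Λ' ⊆ Λ) :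
    ∃ l : Fin m → ℤ, (fun x => x + l) '' Λ' ⊆ Λ ∧
      JointlyIntersectiveOn p ((fun x => x + l) '' Λ') :=
  jointly_intersective_on_translated_sublattice_general p Λ hΛ hJI Λ' hΛ' hsub
end

section
/- Let Λ be a lattice in ℤ^m and let p₁,…,p_r be integral polynomials that are jointly intersective on Λ. Then for every k ∈ ℕ there exists a sublattice Λ' ⊆ Λ such that p₁,…,p_r are jointly intersective on Λ' and k divides p_i(n) for all n ∈ Λ' and all i = 1,…,r. -/
open MvPolynomial

namespace MvPolynomial

variable {σ : Type*}

theorem eval_modEq {n : ℤ} {x y : σ → ℤ} (h : ∀ j, x j ≡ y j [ZMOD n]) (q : MvPolynomial σ ℤ) :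
    eval x q ≡ eval y q [ZMOD n] := by
  induction q using MvPolynomial.induction_on with
  | C a => simp only [eval_C]; rfl
  | add q₁ q₂ h₁ h₂ => simpa only [map_add] using h₁.add h₂
  | mul_X q j hq => simpa only [map_mul, eval_X] using hq.mul (h j)

theorem exists_pos_C_mul_eq_map_int (p : MvPolynomial σ ℚ) :
    ∃ D : ℕ, 0 < D ∧ ∃ q : MvPolynomial σ ℤ, map (Int.castRingHom ℚ) q = C (D : ℚ) * p := by
  classical
  refine ⟨∏ s ∈ p.support, (p.coeff s).den, Finset.prod_pos fun s _ => (p.coeff s).pos, ?_⟩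
  rw [← Set.mem_range, mem_range_map_iff_coeffs_subset]
  intro a ha
  obtain ⟨s, hs, rfl⟩ := mem_coeffs_iff.mp ha
  rw [mem_support_iff, coeff_C_mul] at hs
  have hs' : s ∈ p.support := mem_support_iff.mpr (right_ne_zero_of_mul hs)
  obtain ⟨t, ht⟩ := Finset.dvd_prod_of_mem (fun s => (p.coeff s).den) hs'
  refine ⟨(p.coeff s).num * t, ?_⟩
  rw [coeff_C_mul, ht, eq_intCast, Int.cast_mul, ← Rat.mul_den_eq_num]
  push_cast
  ring

end MvPolynomial

theorem exists_evalZm_sub_eq_mul {m : ℕ} (p : MvPolynomial (Fin m) ℚ) :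
    ∃ D : ℕ, 0 < D ∧ ∀ (k : ℤ) (x y : Fin m → ℤ), (∀ j, x j ≡ y j [ZMOD k * D]) →
      ∃ w : ℤ, evalZm p x - evalZm p y = k * w := by
  obtain ⟨D, hD, q, hq⟩ := exists_pos_C_mul_eq_map_int p
  have hDq : ∀ x : Fin m → ℤ, (D : ℚ) * evalZm p x = eval x q := by
    intro x
    rw [evalZm, ← eval_C (f := fun i => (x i : ℚ)) (D : ℚ), ← map_mul, ← hq, eval_map]
    exact (eval₂_comp_left (Int.castRingHom ℚ) (RingHom.id ℤ) x q).symm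
  refine ⟨D, hD, fun k x y hxy => ?_⟩
  obtain ⟨w, hw⟩ := (eval_modEq hxy q).symm.dvd
  refine ⟨w, mul_left_cancel₀ (Nat.cast_ne_zero.mpr hD.ne') ?_⟩
  rw [mul_sub, hDq, hDq, ← Int.cast_sub, hw]
  push_cast
  ring

theorem IsLattice.exists_pos_forall_modEq_mem {m : ℕ} {Λ : Set (Fin m → ℤ)} (hΛ : IsLattice Λ) :
    ∃ N : ℕ, 0 < N ∧ ∀ c ∈ Λ, ∀ x : Fin m → ℤ, (∀ j, x j ≡ c j [ZMOD N]) → x ∈ Λ := by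
  obtain ⟨H, l, hH, rfl⟩ := hΛ
  refine ⟨H.index, Nat.pos_of_ne_zero hH.index_ne_zero, fun c hc x hx => ?_⟩
  choose w hw using fun j => (hx j).symm.dvd
  have hxc : x - c = H.index • w := funext fun j => by simp [hw j]
  have : x - c ∈ H := hxc ▸ H.nsmul_index_mem w
  simpa using H.add_mem this hc

theorem isLattice_setOf_modEq {m : ℕ} (K : ℕ) [NeZero K] (c : Fin m → ℤ) :
    IsLattice {x : Fin m → ℤ | ∀ j, x j ≡ c j [ZMOD K]} := by
  let f := AddMonoidHom.compLeft (Int.castAddHom (ZMod K)) (Fin m)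
  refine ⟨f.ker, c, AddSubgroup.finiteIndex_ker f, Set.ext fun x => ?_⟩
  simp [f, funext_iff, sub_eq_zero, ZMod.intCast_eq_intCast_iff]

theorem Finite.exists_fiber_of_dvd_antitone {α β : Type*} [Finite β] (f : α → β)
    {P : ℕ → α → Prop} (hP : ∀ {k l a}, k ∣ l → P l a → P k a)
    (h : ∀ k, 0 < k → ∃ a, P k a) : ∃ b, ∀ k, 0 < k → ∃ a, f a = b ∧ P k a := by
  have := Fintype.ofFinite β
  by_contra! hne
  choose K hK hKP using hne
  obtain ⟨a, ha⟩ := h (∏ b, K b) (Finset.prod_pos fun b _ => hK b)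
  exact hKP (f a) a rfl (hP (Finset.dvd_prod_of_mem K (Finset.mem_univ _)) ha)

theorem intCast_comp_eq_iff_modEq {σ : Type*} {K : ℕ} {x y : σ → ℤ} :
    (Int.cast ∘ x : σ → ZMod K) = Int.cast ∘ y ↔ ∀ j, x j ≡ y j [ZMOD K] := by
  simp only [funext_iff, Function.comp_apply, ZMod.intCast_eq_intCast_iff]

def ValuesDvdAt {m r : ℕ} (p : Fin r → MvPolynomial (Fin m) ℚ) (k : ℕ) (n : Fin m → ℤ) : Prop :=
  ∀ i, ∃ z : ℤ, evalZm (p i) n = (k : ℚ) * z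

theorem ValuesDvdAt.of_dvd {m r : ℕ} {p : Fin r → MvPolynomial (Fin m) ℚ} {a b : ℕ}
    {n : Fin m → ℤ} (hab : a ∣ b) (h : ValuesDvdAt p b n) : ValuesDvdAt p a n := by
  obtain ⟨c, rfl⟩ := hab
  intro i
  obtain ⟨z, hz⟩ := h i
  exact ⟨c * z, by rw [hz]; push_cast; ring⟩

theorem exists_pos_valuesDvdAt_of_modEq {m r : ℕ} (p : Fin r → MvPolynomial (Fin m) ℚ) :
    ∃ D : ℕ, 0 < D ∧ ∀ (k : ℕ) (x y : Fin m → ℤ), (∀ j, x j ≡ y j [ZMOD k * D]) →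
      ValuesDvdAt p k y → ValuesDvdAt p k x := by
  choose D hD hpD using fun i => exists_evalZm_sub_eq_mul (p i)
  refine ⟨∏ i, D i, Finset.prod_pos fun i _ => hD i, fun k x y hxy hy i => ?_⟩
  have hDi : (k : ℤ) * D i ∣ k * (∏ i, D i : ℕ) :=
    mul_dvd_mul_left _ (mod_cast Finset.dvd_prod_of_mem D (Finset.mem_univ i))
  obtain ⟨w, hw⟩ := hpD i k x y fun j => (hxy j).of_dvd hDi
  obtain ⟨z, hz⟩ := hy i
  refine ⟨w + z, ?_⟩
  rw [← sub_add_cancel (evalZm (p i) x) (evalZm (p i) y), hw, hz]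
  push_cast
  ring

theorem jointly_intersective_on_divisible_sublattice_general {m r : ℕ}
    (p : Fin r → MvPolynomial (Fin m) ℚ) (Λ : Set (Fin m → ℤ)) (hΛ : IsLattice Λ)
    (hJI : JointlyIntersectiveOn p Λ)
    (k : ℕ) (hk : 0 < k) :
    ∃ Λ' : Set (Fin m → ℤ), IsLattice Λ' ∧ Λ' ⊆ Λ ∧ JointlyIntersectiveOn p Λ' ∧
      ∀ n ∈ Λ', ∀ i, ∃ z : ℤ, evalZm (p i) n = (k : ℚ) * z := by
  obtain ⟨N, hN, hΛN⟩ := hΛ.exists_pos_forall_modEq_mem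
  obtain ⟨D, hD, hpD⟩ := exists_pos_valuesDvdAt_of_modEq p
  set K := k * D * N
  have : NeZero K := ⟨by positivity⟩
  obtain ⟨c, hc⟩ := Finite.exists_fiber_of_dvd_antitone (fun n => (Int.cast ∘ n : Fin m → ZMod K))
    (P := fun a n => n ∈ Λ ∧ ValuesDvdAt p a n) (fun hab h => ⟨h.1, h.2.of_dvd hab⟩) hJI
  obtain ⟨n₀, hn₀c, hn₀Λ, hn₀⟩ := hc k hk
  refine ⟨{x | ∀ j, x j ≡ n₀ j [ZMOD K]}, isLattice_setOf_modEq K n₀,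
    fun x hx => hΛN n₀ hn₀Λ x fun j => (hx j).of_dvd ⟨k * D, by push_cast [K]; ring⟩,
    fun k' hk' => ?_,
    fun x hx => hpD k x n₀ (fun j => (hx j).of_dvd ⟨N, by push_cast [K]; ring⟩) hn₀⟩
  obtain ⟨n, hnc, -, hn⟩ := hc k' hk'
  exact ⟨n, intCast_comp_eq_iff_modEq.mp (hnc.trans hn₀c.symm), hn⟩

/-- If `p₁,…,p_r` are jointly intersective on a lattice `Λ`, then for
every `k ∈ ℕ` there is a sublattice `Λ' ⊆ Λ` on which `p₁,…,p_r` are jointly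
intersective, and such that `k` divides every `pᵢ(n)` for all `n ∈ Λ'`. -/
theorem jointly_intersective_on_divisible_sublattice {m r : ℕ}
    (p : Fin r → MvPolynomial (Fin m) ℚ) (Λ : Set (Fin m → ℤ)) (hΛ : IsLattice Λ)
    (hint : ∀ i, IsIntegralOn (p i) Λ) (hJI : JointlyIntersectiveOn p Λ)
    (k : ℕ) (hk : 0 < k) :
    ∃ Λ' : Set (Fin m → ℤ), IsLattice Λ' ∧ Λ' ⊆ Λ ∧ JointlyIntersectiveOn p Λ' ∧
      ∀ n ∈ Λ', ∀ i, ∃ z : ℤ, evalZm (p i) n = (k : ℚ) * z :=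
  jointly_intersective_on_divisible_sublattice_general p Λ hΛ hJI k hk
end

section
/- Integral polynomials p₁,…,p_r of one variable are jointly intersective if and only if there exists an intersective polynomial p ∈ ℚ[n] such that p divides p_i in the ring ℚ[n] for every i = 1,…,r. -/
/-- Evaluation of a rational polynomial in one variable at an integer. -/
noncomputable def evalZ1 (p : Polynomial ℚ) (n : ℤ) : ℚ :=
  Polynomial.eval (n : ℚ) p

/-- An integral polynomial: a rational polynomial taking integer values on `ℤ`. -/
def IsIntegralPoly1 (p : Polynomial ℚ) : Prop :=
  ∀ n : ℤ, ∃ z : ℤ, evalZ1 p n = (z : ℚ)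

/-- The integer value of an integral polynomial at an integer. -/
noncomputable def zval1 (p : Polynomial ℚ) (n : ℤ) : ℤ :=
  (evalZ1 p n).num

/-- An intersective integral polynomial: for every `k ∈ ℕ` there is `n ∈ ℤ`
with `k ∣ p(n)`. -/
def Intersective1 (p : Polynomial ℚ) : Prop :=
  ∀ k : ℕ, 0 < k → ∃ n : ℤ, (k : ℤ) ∣ zval1 p n

/-- Jointly intersective: for every `k ∈ ℕ` there is `n ∈ ℤ` with `k ∣ pᵢ(n)` for all `i`. -/
def JointlyIntersective1 {r : ℕ} (p : Fin r → Polynomial ℚ) : Prop :=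
  ∀ k : ℕ, 0 < k → ∃ n : ℤ, ∀ i, (k : ℤ) ∣ zval1 (p i) n

/-!
`ℚ[n]` is a principal ideal domain, so `p₁,…,p_r` generate an ideal `(g)`, and a nonzero
constant multiple `q = d g` is integral without changing that ideal. Both directions then rest
on one transfer principle: if every `g_j` lies in the ideal generated by integral polynomials
`f_i`, write `g_j = ∑ a_{ji} f_i` and let `d` clear the denominators of all the values of the
`a_{ji}`. Then `d g_j(n)` is an integer combination of the `f_i(n)`, so a common root of the
`f_i` modulo `k |d|` is a common root of the `g_j` modulo `k`.
-/

open Polynomial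

theorem IsIntegralPoly1.evalZ1_eq_zval1 {p : ℚ[X]} (hp : IsIntegralPoly1 p) (n : ℤ) :
    evalZ1 p n = zval1 p n := by
  obtain ⟨z, hz⟩ := hp n
  rw [zval1, hz, Rat.num_intCast]

attribute [local instance] Polynomial.algebra in
theorem exists_ne_zero_forall_isIntegralPoly1_C_mul {ι : Type*} [Finite ι] (f : ι → ℚ[X]) :
    ∃ d : ℤ, d ≠ 0 ∧ ∀ i, IsIntegralPoly1 (C (d : ℚ) * f i) := by
  have := Polynomial.isLocalization (nonZeroDivisors ℤ) ℚ
  obtain ⟨⟨_, d, hd, rfl⟩, hinteger⟩ :=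
    IsLocalization.exist_integer_multiples_of_finite ((nonZeroDivisors ℤ).map C) f
  refine ⟨d, nonZeroDivisors.coe_ne_zero ⟨d, hd⟩, fun i n => ?_⟩
  obtain ⟨F, hF⟩ := hinteger i
  have hmap : C (d : ℚ) * f i = F.map (Int.castRingHom ℚ) := by
    rw [Algebra.smul_def, algebraMap_def] at hF
    simpa using hF.symm
  refine ⟨F.eval n, ?_⟩
  rw [evalZ1, hmap, eval_intCast_map, eq_intCast, Int.cast_id]

theorem JointlyIntersective1.of_forall_mem_span {r s : ℕ} {f : Fin r → ℚ[X]} {g : Fin s → ℚ[X]}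
    (hf : ∀ i, IsIntegralPoly1 (f i)) (hg : ∀ j, g j ∈ Ideal.span (Set.range f))
    (h : JointlyIntersective1 f) : JointlyIntersective1 g := by
  choose a ha using fun j => Ideal.mem_span_range_iff_exists_fun.mp (hg j)
  obtain ⟨d, hd, had⟩ :=
    exists_ne_zero_forall_isIntegralPoly1_C_mul fun ji : Fin s × Fin r => a ji.1 ji.2
  intro k hk
  obtain ⟨n, hn⟩ := h (k * d.natAbs) (Nat.mul_pos hk (Int.natAbs_pos.mpr hd))
  refine ⟨n, fun j => ?_⟩
  set S := ∑ i, zval1 (C (d : ℚ) * a j i) n * zval1 (f i) n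
  have hS : (d : ℚ) * evalZ1 (g j) n = S := by
    simp only [S, ← ha j, evalZ1, eval_finsetSum, eval_mul, Finset.mul_sum, Int.cast_sum,
      Int.cast_mul]
    refine Finset.sum_congr rfl fun i _ => ?_
    rw [← (had (j, i)).evalZ1_eq_zval1, ← (hf i).evalZ1_eq_zval1]
    simp [evalZ1, mul_assoc]
  obtain ⟨m, hm⟩ : (k * d : ℤ) ∣ S := by
    refine (mul_dvd_mul_left (k : ℤ) (self_dvd_abs d)).trans ?_
    rw [← Int.natCast_natAbs]
    exact Finset.dvd_sum fun i _ => (hn i).mul_left _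
  have hgj : evalZ1 (g j) n = (k * m : ℤ) := by
    refine mul_left_cancel₀ (Int.cast_ne_zero.mpr hd) (hS.trans ?_)
    rw [hm]
    push_cast
    ring
  rw [zval1, hgj, Rat.num_intCast]
  exact dvd_mul_right _ _

theorem jointlyIntersective1_const_iff (q : ℚ[X]) :
    JointlyIntersective1 (fun _ : Fin 1 => q) ↔ Intersective1 q := by
  simp [JointlyIntersective1, Intersective1]

/-- Integral polynomials `p₁,…,p_r` of one variable are jointly
intersective if and only if they are all multiples (in `ℚ[n]`) of a single intersective
polynomial. -/
theorem jointly_intersective_iff_common_intersective_divisor {r : ℕ}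
    (p : Fin r → Polynomial ℚ) (hint : ∀ i, IsIntegralPoly1 (p i)) :
    JointlyIntersective1 p ↔
      ∃ q : Polynomial ℚ, IsIntegralPoly1 q ∧ Intersective1 q ∧ ∀ i, q ∣ p i := by
  constructor
  · intro hJ
    obtain ⟨g, hg⟩ := (IsPrincipalIdealRing.principal (Ideal.span (Set.range p))).principal
    replace hg : Ideal.span (Set.range p) = Ideal.span {g} := hg
    have hg_dvd (i : Fin r) : g ∣ p i :=
      Ideal.mem_span_singleton.mp (hg ▸ Ideal.subset_span ⟨i, rfl⟩)
    obtain ⟨d, hd, hdg⟩ := exists_ne_zero_forall_isIntegralPoly1_C_mul fun _ : Fin 1 => g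
    have hq : C (d : ℚ) * g ∈ Ideal.span (Set.range p) :=
      hg ▸ Ideal.mem_span_singleton.mpr (dvd_mul_left g _)
    exact ⟨C (d : ℚ) * g, hdg 0,
      (jointlyIntersective1_const_iff _).mp (hJ.of_forall_mem_span hint fun _ => hq),
      fun i => (C_mul_dvd (Int.cast_ne_zero.mpr hd)).mpr (hg_dvd i)⟩
  · rintro ⟨q, hq, hqI, hdvd⟩
    refine ((jointlyIntersective1_const_iff q).mpr hqI).of_forall_mem_span (fun _ => hq) ?_
    rw [Set.range_const]
    exact fun i => Ideal.mem_span_singleton.mpr (hdvd i)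
end
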